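/- Let f₁,…,fₙ: ℝ → ℝ be increasing functions. Then the set D₁ = { x ∈ ℝⁿ : ∃ a ∈ ℝ such that a ∈ [fᵢ(xᵢ⁻), fᵢ(xᵢ⁺)] for all i } is a closed subset of ℝⁿ. -/

import Mathlib

/-!
Finitely many intervals `[lᵢ, rᵢ]` meet iff `lᵢ ≤ rⱼ` for all `i, j`, so `D₁` is the intersection
over pairs `(i, j)` of the sets `{x | fᵢ(xᵢ⁻) ≤ fⱼ(xⱼ⁺)}`. For monotone `f`, the map `x ↦ f(x⁻)` is
lower and `x ↦ f(x⁺)` upper semicontinuous, and `{u ≤ v}` is closed for `u` lower and `v` upper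
semicontinuous.
-/

open Filter Topology Function

section LeftRightLim

variable {α β : Type*} [LinearOrder α] [TopologicalSpace α] [OrderTopology α]
  [ConditionallyCompleteLinearOrder β] [TopologicalSpace β] [OrderTopology β] {f : α → β}

theorem Monotone.lowerSemicontinuous_leftLim (hf : Monotone f) :
    LowerSemicontinuous (leftLim f) := by
  intro x y hy
  rcases eq_or_neBot (𝓝[<] x) with hbot | hne
  · have hge : ∀ᶠ x' in 𝓝 x, x ≤ x' := by
      have : ∅ ∈ 𝓝[<] x := by simp [hbot]
      filter_upwards [mem_nhdsWithin_iff_eventually.1 this] with x' hx'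
      exact not_lt.1 hx'
    filter_upwards [hge] with x' hx'
    exact hy.trans_le (hf.leftLim hx')
  · obtain ⟨t, hyt, htx⟩ :=
      ((hf.tendsto_leftLim x).eventually (eventually_gt_nhds hy)).and self_mem_nhdsWithin |>.exists
    filter_upwards [Ioi_mem_nhds htx] with x' hx'
    exact hyt.trans_le (hf.le_leftLim hx')

theorem Monotone.upperSemicontinuous_rightLim (hf : Monotone f) :
    UpperSemicontinuous (rightLim f) :=
  hf.dual.lowerSemicontinuous_leftLim

end LeftRightLim

theorem LowerSemicontinuous.isClosed_le {X γ : Type*} [TopologicalSpace X] [LinearOrder γ]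
    {u v : X → γ} (hu : LowerSemicontinuous u) (hv : UpperSemicontinuous v) :
    IsClosed {x | u x ≤ v x} := by
  refine isOpen_compl_iff.1 (isOpen_iff_mem_nhds.2 fun x hx => ?_)
  simp only [Set.mem_compl_iff, Set.mem_ofPred_eq, not_le] at hx
  by_cases hgap : ∃ c, v x < c ∧ c < u x
  · obtain ⟨c, hvc, hcu⟩ := hgap
    filter_upwards [hu x c hcu, hv x c hvc] with x' hcu' hvc'
    exact not_le.2 (hvc'.trans hcu')
  · filter_upwards [hu x (v x) hx, hv x (u x) hx] with x' hvu' hvu''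
    -- otherwise `v x < u x' ≤ v x' < u x` puts `u x'` into the gap
    exact fun hle => hgap ⟨u x', hvu', hle.trans_lt hvu''⟩

theorem Set.nonempty_iInter_Icc_iff {ι β : Type*} [Finite ι] [ConditionallyCompleteLattice β]
    {l r : ι → β} : (⋂ i, Set.Icc (l i) (r i)).Nonempty ↔ ∀ i j, l i ≤ r j := by
  refine ⟨fun ⟨a, ha⟩ i j => ?_, fun h => ?_⟩
  · rw [Set.mem_iInter] at ha
    exact (ha i).1.trans (ha j).2
  rcases isEmpty_or_nonempty ι with hι | hι
  · simp
  exact ⟨⨆ i, l i, Set.mem_iInter.2 fun j =>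
    ⟨le_ciSup (Set.finite_range l).bddAbove j, ciSup_le fun i => h i j⟩⟩

theorem filippov_consensus_set_isClosed (n : ℕ) (f : Fin n → ℝ → ℝ)
    (hf : ∀ i, Monotone (f i)) :
    IsClosed {x : Fin n → ℝ | ∃ a : ℝ, ∀ i,
      a ∈ Set.Icc (leftLim (f i) (x i)) (rightLim (f i) (x i))} := by
  have hD : {x : Fin n → ℝ | ∃ a : ℝ, ∀ i,
      a ∈ Set.Icc (leftLim (f i) (x i)) (rightLim (f i) (x i))} =
      ⋂ i, ⋂ j, {x | leftLim (f i) (x i) ≤ rightLim (f j) (x j)} := by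
    ext x
    simp only [Set.mem_ofPred_eq, Set.mem_iInter, ← Set.nonempty_iInter, Set.nonempty_iInter_Icc_iff]
  rw [hD]
  exact isClosed_iInter fun i => isClosed_iInter fun j =>
    ((hf i).lowerSemicontinuous_leftLim.comp (continuous_apply i)).isClosed_le
      ((hf j).upperSemicontinuous_rightLim.comp (continuous_apply j))
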